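/- arXiv:2409.00453 — 3 statements merged into one kernel-verified Lean document; each statement's English description precedes it below -/
import Mathlib

section
/- Parent adjustment formula: suppose D is acyclic and all entries θ^{j|pa(j)}_{m|s} are strictly positive. Then for every h ∈ V, x̃ ∈ 𝒳_h, every node j₀ ≠ h and level y ∈ 𝒳_{j₀}, the post-intervention probability equals the observational expression adjusted by the parents of h: Σ_{x : x_h = x̃, x_{j₀} = y} p(x | do(X_h = x̃)) = Σ_{s∈𝒳_{pa(h)}} [P(X_{j₀} = y, X_h = x̃, X_{pa(h)} = s) / P(X_h = x̃, X_{pa(h)} = s)] · P(X_{pa(h)} = s), where for any coordinate constraints P(·) denotes the sum of p(x) = ∏_{j∈V} θ^{j|pa(j)}_{x_j|x_{pa(j)}} over all x ∈ 𝒳_V satisfying them. -/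
open Finset

/-- A parent configuration: an assignment of a level to each variable in `S`. -/
abbrev Conf (q : ℕ) (kk : Fin q → ℕ) (S : Finset (Fin q)) : Type :=
  (u : S) → Fin (kk u)

/-- Restriction of a full configuration to the variables in `S`. -/
def restr {q : ℕ} {kk : Fin q → ℕ} (x : (j : Fin q) → Fin (kk j))
    (S : Finset (Fin q)) : Conf q kk S := fun u => x u

/-- The observational joint probability `p(x) = ∏_j θ^{j|pa(j)}_{x_j|x_{pa(j)}}`. -/
def jointP {q : ℕ} {kk : Fin q → ℕ} (pa : Fin q → Finset (Fin q))
    (θ : (j : Fin q) → Conf q kk (pa j) → Fin (kk j) → ℝ)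
    (x : (j : Fin q) → Fin (kk j)) : ℝ :=
  ∏ j : Fin q, θ j (restr x (pa j)) (x j)

open scoped Classical in
/-- `P(·)`: the probability, under the observational joint `p`, of the set of
configurations satisfying a given coordinate constraint. -/
noncomputable def probOf {q : ℕ} {kk : Fin q → ℕ} (pa : Fin q → Finset (Fin q))
    (θ : (j : Fin q) → Conf q kk (pa j) → Fin (kk j) → ℝ)
    (A : ((j : Fin q) → Fin (kk j)) → Prop) : ℝ :=
  ∑ x ∈ Finset.univ.filter A, jointP pa θ x

section AuxLemmas

open scoped Classical

lemma sum_update_eq {q : ℕ} {kk : Fin q → ℕ} (t : Fin q) (c : Fin (kk t))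
    (P : ((j : Fin q) → Fin (kk j)) → Prop)
    (hP : ∀ x m, P x ↔ P (Function.update x t m))
    (f : ((j : Fin q) → Fin (kk j)) → ℝ) :
    ∑ x ∈ univ.filter P, f x
      = ∑ x ∈ univ.filter (fun x => P x ∧ x t = c),
          ∑ m : Fin (kk t), f (Function.update x t m) := by
  rw [← Finset.sum_product']
  refine Finset.sum_nbij' (fun x => (Function.update x t c, x t))
    (fun p => Function.update p.1 t p.2) ?_ ?_ ?_ ?_ ?_
  · intro x hx
    simp only [Finset.mem_filter, Finset.mem_univ, true_and] at hx ⊢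
    rw [Finset.mem_product]
    refine ⟨Finset.mem_filter.2 ⟨Finset.mem_univ _, ?_, ?_⟩, Finset.mem_univ _⟩
    · exact (hP x c).1 hx
    · simp
  · intro p hp
    rw [Finset.mem_product] at hp
    have h1 := Finset.mem_filter.1 hp.1
    simp only [Finset.mem_filter, Finset.mem_univ, true_and]
    exact (hP p.1 p.2).1 h1.2.1
  · intro x _
    simp [Function.update_idem, Function.update_eq_self]
  · intro p hp
    rw [Finset.mem_product] at hp
    have h1 := (Finset.mem_filter.1 hp.1).2.2
    ext : 1
    · simp [Function.update_idem, ← h1, Function.update_eq_self]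
    · simp
  · intro x _
    simp [Function.update_idem, Function.update_eq_self]

lemma sumOut {q : ℕ} {kk : Fin q → ℕ} (pa : Fin q → Finset (Fin q))
    (θ : (j : Fin q) → Conf q kk (pa j) → Fin (kk j) → ℝ)
    (hθsum : ∀ j s, ∑ m : Fin (kk j), θ j s m = 1)
    (ρ : Fin q ≃ Fin q) (hρ : ∀ j : Fin q, ∀ u ∈ pa j, ρ u < ρ j)
    (d : (j : Fin q) → Fin (kk j)) (F : Finset (Fin q)) :
    ∀ P : ((j : Fin q) → Fin (kk j)) → Prop,
      (∀ x x', (∀ j, j ∉ F → x j = x' j) → (P x ↔ P x')) →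
    ∀ f : ((j : Fin q) → Fin (kk j)) → ℝ,
      (∀ x x', (∀ j, j ∉ F → x j = x' j) → f x = f x') →
    ∑ x ∈ univ.filter P, f x * ∏ j ∈ F, θ j (restr x (pa j)) (x j)
      = ∑ x ∈ univ.filter (fun x => P x ∧ ∀ j ∈ F, x j = d j), f x := by
  induction F using Finset.strongInduction with
  | _ F ih =>
    intro P hPdep f hfdep
    rcases F.eq_empty_or_nonempty with hFe | hFne
    · subst hFe
      simp only [Finset.prod_empty, mul_one, Finset.notMem_empty, false_implies,
        implies_true, and_true]
    · obtain ⟨t, htF, htmax⟩ := F.exists_max_image (fun j => ρ j) hFne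
      have hnotpa : ∀ j ∈ F, t ∉ pa j := by
        intro j hj hmem
        have h1 := hρ j t hmem
        have h2 := htmax j hj
        exact absurd (lt_of_lt_of_le h1 h2) (lt_irrefl _)
      have htt : t ∉ pa t := hnotpa t htF
      have hne_of_notF : ∀ j, j ∉ F → j ≠ t := fun j hj he => hj (he ▸ htF)
      rw [sum_update_eq t (d t) P
        (fun x m => hPdep x (Function.update x t m)
          (fun j hj => (Function.update_of_ne (hne_of_notF j hj) _ _).symm))]
      have key : ∀ x : (j : Fin q) → Fin (kk j),
          (∑ m : Fin (kk t), f (Function.update x t m) *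
            ∏ j ∈ F, θ j (restr (Function.update x t m) (pa j)) ((Function.update x t m) j))
          = f x * ∏ j ∈ F.erase t, θ j (restr x (pa j)) (x j) := by
        intro x
        have hf : ∀ m, f (Function.update x t m) = f x := fun m =>
          (hfdep x (Function.update x t m)
            (fun j hj => (Function.update_of_ne (hne_of_notF j hj) _ _).symm)).symm
        have hrestr : ∀ m, ∀ j ∈ F,
            restr (Function.update x t m) (pa j) = restr x (pa j) := by
          intro m j hj
          funext u
          exact Function.update_of_ne (fun he => hnotpa j hj (by rw [← he]; exact u.2)) _ _
        have hprod : ∀ m, (∏ j ∈ F, θ j (restr (Function.update x t m) (pa j))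
            ((Function.update x t m) j))
            = θ t (restr x (pa t)) m * ∏ j ∈ F.erase t, θ j (restr x (pa j)) (x j) := by
          intro m
          rw [← Finset.mul_prod_erase F _ htF]
          congr 1
          · rw [hrestr m t htF, Function.update_self]
          · refine Finset.prod_congr rfl (fun j hj => ?_)
            rw [hrestr m j (Finset.mem_of_mem_erase hj),
              Function.update_of_ne (Finset.ne_of_mem_erase hj) _ _]
        simp only [hf, hprod]
        rw [← Finset.mul_sum, ← Finset.sum_mul, hθsum t (restr x (pa t)), one_mul]
      simp only [key]
      have hih := (ih (F.erase t) (Finset.erase_ssubset htF)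
        (fun x => P x ∧ x t = d t)
        (fun x x' hxx' => by
          have hx : ∀ j, j ∉ F → x j = x' j := fun j hj =>
            hxx' j (fun hjF => hj (Finset.mem_of_mem_erase hjF))
          have ht' : x t = x' t := hxx' t (Finset.notMem_erase t F)
          exact and_congr (hPdep x x' hx) (by rw [ht']))
        f
        (fun x x' hxx' => hfdep x x'
          (fun j hj => hxx' j (fun hjF => hj (Finset.mem_of_mem_erase hjF)))))
      refine Eq.trans (Eq.trans (Finset.sum_congr (by congr) (fun _ _ => rfl)) hih) ?_
      refine Finset.sum_congr ?_ (fun _ _ => rfl)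
      ext x
      simp only [Finset.mem_filter, Finset.mem_univ, true_and]
      constructor
      · rintro ⟨⟨hP, ht⟩, hrest⟩
        refine ⟨hP, fun j hj => ?_⟩
        rcases eq_or_ne j t with rfl | hne
        · exact ht
        · exact hrest j (Finset.mem_erase.2 ⟨hne, hj⟩)
      · rintro ⟨hP, hall⟩
        exact ⟨⟨hP, hall t htF⟩, fun j hj => hall j (Finset.mem_of_mem_erase hj)⟩

end AuxLemmas

set_option maxHeartbeats 1000000 in
open scoped Classical in
/-- Parent adjustment formula: for an acyclic DAG with strictly positive
conditional probability tables, the post-intervention probability of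
`{X_{j₀} = y}` under `do(X_h = x̃)` equals the observational conditional
probabilities of `{X_{j₀} = y}` given `X_h = x̃` and the parents of `h`,
averaged over the marginal distribution of the parents of `h`. -/
theorem parent_adjustment (q : ℕ) (kk : Fin q → ℕ) (hkk : ∀ j, 1 ≤ kk j)
    (pa : Fin q → Finset (Fin q)) (hpa : ∀ j, j ∉ pa j)
    (hacyclic : ∃ ρ : Fin q ≃ Fin q, ∀ j : Fin q, ∀ u ∈ pa j, ρ u < ρ j)
    (θ : (j : Fin q) → Conf q kk (pa j) → Fin (kk j) → ℝ)
    (hθpos : ∀ j s m, 0 < θ j s m)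
    (hθsum : ∀ j s, ∑ m : Fin (kk j), θ j s m = 1)
    (h : Fin q) (xt : Fin (kk h)) (j₀ : Fin q) (hj₀ : j₀ ≠ h) (y : Fin (kk j₀)) :
    ∑ x ∈ Finset.univ.filter
        (fun x : (j : Fin q) → Fin (kk j) => x h = xt ∧ x j₀ = y),
        ∏ j ∈ Finset.univ.erase h, θ j (restr x (pa j)) (x j) =
      ∑ s : Conf q kk (pa h),
        (probOf pa θ (fun x => x j₀ = y ∧ x h = xt ∧ restr x (pa h) = s) /
            probOf pa θ (fun x => x h = xt ∧ restr x (pa h) = s)) *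
          probOf pa θ (fun x => restr x (pa h) = s) := by
  obtain ⟨ρ, hρ⟩ := hacyclic
  set d : (j : Fin q) → Fin (kk j) := fun j => ⟨0, hkk j⟩ with hddef
  set F : Finset (Fin q) := univ.filter (fun j => ρ h < ρ j) with hFdef
  set G : Finset (Fin q) := univ.filter (fun j => ρ j < ρ h) with hGdef
  have hmemF : ∀ j, j ∈ F ↔ ρ h < ρ j := fun j => by rw [hFdef]; simp
  have hmemG : ∀ j, j ∈ G ↔ ρ j < ρ h := fun j => by rw [hGdef]; simp
  have hhF : h ∉ F := fun hx => lt_irrefl _ ((hmemF h).1 hx)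
  have hGF : ∀ j ∈ G, j ∉ F := fun j hj hjF =>
    lt_asymm ((hmemG j).1 hj) ((hmemF j).1 hjF)
  have hGh : ∀ j ∈ G, j ≠ h := fun j hj he =>
    absurd ((hmemG j).1 hj) (by rw [he]; exact lt_irrefl _)
  have hpaG : ∀ j, j ∉ F → ∀ u ∈ pa j, u ∈ G := by
    intro j hjF u hu
    have h1 : ρ u < ρ j := hρ j u hu
    have h2 : ¬ ρ h < ρ j := fun hc => hjF ((hmemF j).2 hc)
    exact (hmemG u).2 (lt_of_lt_of_le h1 (le_of_not_gt h2))
  have hsplit : (univ.erase h : Finset (Fin q)) = F ∪ G := by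
    ext j
    simp only [Finset.mem_erase, Finset.mem_univ, and_true, Finset.mem_union]
    constructor
    · intro hne
      have hne' : ρ j ≠ ρ h := fun he => hne (ρ.injective he)
      rcases hne'.lt_or_gt with hlt | hgt
      · exact Or.inr ((hmemG j).2 hlt)
      · exact Or.inl ((hmemF j).2 hgt)
    · rintro (hj | hj)
      · exact fun he => hhF (he ▸ hj)
      · exact hGh j hj
  have hdisj : Disjoint F G := Finset.disjoint_left.2 (fun j hjF hjG => hGF j hjG hjF)
  set f : ((j : Fin q) → Fin (kk j)) → ℝ :=
    fun x => ∏ j ∈ G, θ j (restr x (pa j)) (x j) with hfdef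
  have hprodsplit : ∀ x : (j : Fin q) → Fin (kk j),
      ∏ j ∈ univ.erase h, θ j (restr x (pa j)) (x j)
        = f x * ∏ j ∈ F, θ j (restr x (pa j)) (x j) := by
    intro x
    rw [hsplit, Finset.prod_union hdisj, mul_comm]
  have hfdep : ∀ x x' : (j : Fin q) → Fin (kk j),
      (∀ j, j ∉ F → x j = x' j) → f x = f x' := by
    intro x x' hxx'
    refine Finset.prod_congr rfl (fun j hj => ?_)
    have h1 : restr x (pa j) = restr x' (pa j) :=
      funext fun u => hxx' u.1 (hGF u.1 (hpaG j (hGF j hj) u.1 u.2))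
    rw [h1, hxx' j (hGF j hj)]
  have hfuph : ∀ x m, f (Function.update x h m) = f x := by
    intro x m
    refine Finset.prod_congr rfl (fun j hj => ?_)
    have h1 : restr (Function.update x h m) (pa j) = restr x (pa j) :=
      funext fun u => Function.update_of_ne (hGh u.1 (hpaG j (hGF j hj) u.1 u.2)) _ _
    rw [h1, Function.update_of_ne (hGh j hj) _ _]
  have hpahG : ∀ (x x' : (j : Fin q) → Fin (kk j)),
      (∀ j, j ∉ F → x j = x' j) → restr x (pa h) = restr x' (pa h) :=
    fun x x' hxx' => funext fun u => hxx' u.1 (hGF u.1 (hpaG h hhF u.1 u.2))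
  have hpahup : ∀ (x : (j : Fin q) → Fin (kk j)) (m : Fin (kk h)),
      restr (Function.update x h m) (pa h) = restr x (pa h) := by
    intro x m
    funext u
    exact Function.update_of_ne (hGh u.1 (hpaG h hhF u.1 u.2)) _ _
  -- nonemptiness / positivity of the denominator-sum
  have hBpos : ∀ s : Conf q kk (pa h),
      0 < ∑ x ∈ univ.filter (fun x => x h = xt ∧ restr x (pa h) = s),
          ∏ j ∈ univ.erase h, θ j (restr x (pa j)) (x j) := by
    intro s
    have hx₀ : ∃ x₀ : (j : Fin q) → Fin (kk j), x₀ h = xt ∧ restr x₀ (pa h) = s := by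
      refine ⟨fun j => if hj : j ∈ pa h then (s ⟨j, hj⟩ : Fin (kk j))
        else if hj2 : j = h then cast (by rw [hj2]) xt else d j, ?_, ?_⟩
      · show (if hj : h ∈ pa h then _ else if hj2 : h = h then _ else _) = xt
        rw [dif_neg (hpa h), dif_pos rfl, cast_eq]
      · funext u
        show (if hj : (u : Fin q) ∈ pa h then _ else _) = s u
        rw [dif_pos u.2]
    obtain ⟨x₀, hx1, hx2⟩ := hx₀
    exact Finset.sum_pos (fun x _ => Finset.prod_pos (fun j _ => hθpos _ _ _))
      ⟨x₀, Finset.mem_filter.2 ⟨Finset.mem_univ _, hx1, hx2⟩⟩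
  -- probOf with the xt-constraint factors
  have hBxt : ∀ s : Conf q kk (pa h),
      probOf pa θ (fun x => x h = xt ∧ restr x (pa h) = s)
      = θ h s xt * ∑ x ∈ univ.filter (fun x => x h = xt ∧ restr x (pa h) = s),
          ∏ j ∈ univ.erase h, θ j (restr x (pa j)) (x j) := by
    intro s
    simp only [probOf, jointP]
    rw [Finset.mul_sum]
    refine Finset.sum_congr (by congr) (fun x hx => ?_)
    have hx' := Finset.mem_filter.1 hx
    rw [← Finset.mul_prod_erase univ _ (Finset.mem_univ h), hx'.2.1, hx'.2.2]
  have hAxt : ∀ s : Conf q kk (pa h),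
      probOf pa θ (fun x => x j₀ = y ∧ x h = xt ∧ restr x (pa h) = s)
      = θ h s xt * ∑ x ∈ univ.filter
            (fun x => (x h = xt ∧ x j₀ = y) ∧ restr x (pa h) = s),
          ∏ j ∈ univ.erase h, θ j (restr x (pa j)) (x j) := by
    intro s
    simp only [probOf, jointP]
    rw [Finset.mul_sum]
    refine Finset.sum_congr ?_ (fun x hx => ?_)
    · ext x
      simp only [Finset.mem_filter, Finset.mem_univ, true_and]
      tauto
    · have hx' := Finset.mem_filter.1 hx
      rw [← Finset.mul_prod_erase univ _ (Finset.mem_univ h), hx'.2.1.1, hx'.2.2]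
  -- the marginal of the parents equals the xt-sliced sum
  have hBeq : ∀ s : Conf q kk (pa h),
      probOf pa θ (fun x => restr x (pa h) = s)
      = ∑ x ∈ univ.filter (fun x => x h = xt ∧ restr x (pa h) = s),
          ∏ j ∈ univ.erase h, θ j (restr x (pa j)) (x j) := by
    intro s
    have e1 : probOf pa θ (fun x => restr x (pa h) = s)
        = ∑ x ∈ univ.filter (fun x => restr x (pa h) = s),
            (θ h (restr x (pa h)) (x h) * f x) *
              ∏ j ∈ F, θ j (restr x (pa j)) (x j) := by
      simp only [probOf, jointP]
      refine Finset.sum_congr (by congr) (fun x _ => ?_)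
      rw [← Finset.mul_prod_erase univ _ (Finset.mem_univ h), hprodsplit x, ← mul_assoc]
    have e2 := sumOut pa θ hθsum ρ hρ d F (fun x => restr x (pa h) = s)
        (fun x x' hxx' => by simp only [hpahG x x' hxx'])
        (fun x => θ h (restr x (pa h)) (x h) * f x)
        (fun x x' hxx' => by simp only [hpahG x x' hxx', hxx' h hhF, hfdep x x' hxx'])
    rw [e1]
    refine Eq.trans (Eq.trans (Finset.sum_congr (by congr) fun _ _ => rfl) e2) ?_
    have e3 : ∑ x ∈ univ.filter (fun x => restr x (pa h) = s ∧ ∀ j ∈ F, x j = d j),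
          θ h (restr x (pa h)) (x h) * f x
        = ∑ x ∈ univ.filter (fun x => restr x (pa h) = s ∧ ∀ j ∈ F, x j = d j),
          θ h s (x h) * f x :=
      Finset.sum_congr rfl (fun x hx => by
        simp only [(Finset.mem_filter.1 hx).2.1])
    refine Eq.trans (Eq.trans (Finset.sum_congr (by congr) fun _ _ => rfl) e3) ?_
    have e4 := sum_update_eq h xt
        (fun x => restr x (pa h) = s ∧ ∀ j ∈ F, x j = d j)
        (fun x m => by
          constructor
          · rintro ⟨h1, h2⟩
            refine ⟨by rw [hpahup x m]; exact h1, fun j hj => ?_⟩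
            rw [Function.update_of_ne (fun he : j = h => hhF (by rw [← he]; exact hj)) _ _]
            exact h2 j hj
          · rintro ⟨h1, h2⟩
            rw [hpahup x m] at h1
            refine ⟨h1, fun j hj => ?_⟩
            have := h2 j hj
            rwa [Function.update_of_ne (fun he : j = h => hhF (by rw [← he]; exact hj)) _ _]
              at this)
        (fun x => θ h s (x h) * f x)
    refine Eq.trans (Eq.trans (Finset.sum_congr (by congr) fun _ _ => rfl) e4) ?_
    have e5 : ∀ x : (j : Fin q) → Fin (kk j),
        (∑ m : Fin (kk h), θ h s ((Function.update x h m) h) * f (Function.update x h m))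
          = f x := by
      intro x
      simp only [Function.update_self, hfuph]
      rw [← Finset.sum_mul, hθsum, one_mul]
    refine Eq.trans (Finset.sum_congr rfl fun x _ => e5 x) ?_
    have e6 := sumOut pa θ hθsum ρ hρ d F (fun x => x h = xt ∧ restr x (pa h) = s)
        (fun x x' hxx' => by simp only [hpahG x x' hxx', hxx' h hhF]) f hfdep
    have e7 : ∑ x ∈ univ.filter (fun x => x h = xt ∧ restr x (pa h) = s),
          ∏ j ∈ univ.erase h, θ j (restr x (pa j)) (x j)
        = ∑ x ∈ univ.filter (fun x => x h = xt ∧ restr x (pa h) = s),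
          f x * ∏ j ∈ F, θ j (restr x (pa j)) (x j) :=
      Finset.sum_congr rfl fun x _ => hprodsplit x
    rw [e7]
    refine Eq.trans (Finset.sum_congr ?_ fun _ _ => rfl)
      (Eq.trans e6.symm (Finset.sum_congr (by congr) fun _ _ => rfl))
    ext x
    simp only [Finset.mem_filter, Finset.mem_univ, true_and]
    tauto
  -- per-s identity
  have key : ∀ s : Conf q kk (pa h),
      (probOf pa θ (fun x => x j₀ = y ∧ x h = xt ∧ restr x (pa h) = s) /
          probOf pa θ (fun x => x h = xt ∧ restr x (pa h) = s)) *
        probOf pa θ (fun x => restr x (pa h) = s)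
      = ∑ x ∈ univ.filter (fun x => (x h = xt ∧ x j₀ = y) ∧ restr x (pa h) = s),
          ∏ j ∈ univ.erase h, θ j (restr x (pa j)) (x j) := by
    intro s
    rw [hAxt s, hBxt s, hBeq s, mul_div_mul_left _ _ (ne_of_gt (hθpos h s xt)),
      div_mul_cancel₀ _ (ne_of_gt (hBpos s))]
  rw [Finset.sum_congr rfl (fun s (_ : s ∈ univ) => key s)]
  refine Eq.trans
    (Finset.sum_fiberwise_of_maps_to (t := (univ : Finset (Conf q kk (pa h))))
      (g := fun x => restr x (pa h))
      (fun x _ => Finset.mem_univ (restr x (pa h))) _).symm ?_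
  refine Finset.sum_congr rfl fun s _ => ?_
  refine Finset.sum_congr ?_ fun _ _ => rfl
  ext x
  simp only [Finset.mem_filter, Finset.mem_univ, true_and]
end

section
/- Causal effect identity for binary exposure and response: suppose D is acyclic, all entries θ^{j|pa(j)}_{m|s} are strictly positive, and 𝒳_h = 𝒳_{j₀} = {0,1} with j₀ ≠ h. Define E[X_{j₀} | do(X_h = x̃)] = Σ_{x : x_h = x̃} x_{j₀} · p(x | do(X_h = x̃)). Then the causal effect c = E[X_{j₀} | do(X_h = 1)] − E[X_{j₀} | do(X_h = 0)] satisfies c = Σ_{s∈𝒳_{pa(h)}} [P(X_{j₀}=1 | X_h=1, X_{pa(h)}=s) − P(X_{j₀}=1 | X_h=0, X_{pa(h)}=s)] · P(X_{pa(h)}=s), where conditional probabilities are defined as ratios P(X_{j₀}=1, X_h=x̃, X_{pa(h)}=s)/P(X_h=x̃, X_{pa(h)}=s) and P(·) denotes the sum of p(x) over all x ∈ 𝒳_V satisfying the stated coordinate constraints. -/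
open Finset

open scoped Classical in
/-- `E[X_{j₀} | do(X_h = x̃)]`: the expectation of the response `X_{j₀}` under the
post-intervention (truncated) distribution `do(X_h = x̃)`. -/
noncomputable def doExp {q : ℕ} {kk : Fin q → ℕ} (pa : Fin q → Finset (Fin q))
    (θ : (j : Fin q) → Conf q kk (pa j) → Fin (kk j) → ℝ)
    (h : Fin q) (j₀ : Fin q) (xt : Fin (kk h)) : ℝ :=
  ∑ x ∈ Finset.univ.filter (fun x : (j : Fin q) → Fin (kk j) => x h = xt),
    ((x j₀ : ℕ) : ℝ) * ∏ j ∈ Finset.univ.erase h, θ j (restr x (pa j)) (x j)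

/-!
Under `do(X_h = x̃)` the truncated factorization is the joint law of the mutilated network in
which the table of `h` is replaced by the point mass at `x̃`. The two networks share the tables of
all nodes preceding `h` in a topological order, and the probability of an event depending only on
those nodes involves only their tables: the later variables can be summed out, each table
summing to one. Hence `P(X_h = x̃, X_{pa(h)} = s) = θ^h_{x̃|s} P(X_{pa(h)} = s)`, while
`P(X_{j₀} = 1, X_h = x̃, X_{pa(h)} = s) = θ^h_{x̃|s} P_do(X_{j₀} = 1, X_{pa(h)} = s)`. So each
summand on the right is `P_do(X_{j₀} = 1, X_{pa(h)} = s)`, and summing over `s` gives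
`E[X_{j₀} | do(X_h = x̃)]` since `X_{j₀}` is binary.
-/

open Function

section UpdateSum
variable {ι : Type*} [Fintype ι] [DecidableEq ι] {α : ι → Type*} [∀ i, Fintype (α i)]

theorem Fintype.sum_sum_update {M : Type*} [AddCommMonoid M] (i : ι) (g : (∀ j, α j) → M) :
    ∑ x, ∑ m, g (update x i m) = Fintype.card (α i) • ∑ x, g x := by
  let e := Equiv.piSplitAt i α
  have hupd : ∀ a y m, update (e.symm (a, y)) i m = e.symm (m, y) := by
    intro a y m
    ext j
    by_cases hj : j = i
    · subst hj; simp [e]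
    · simp [e, hj]
  rw [← e.symm.sum_comp, ← e.symm.sum_comp, Fintype.sum_prod_type, Fintype.sum_prod_type]
  simp only [hupd, Finset.sum_const, Finset.card_univ]
  rw [Finset.sum_comm]

theorem card_mul_sum_mul_eq_sum {R : Type*} [Semiring R] (i : ι) (w F : (∀ j, α j) → R)
    (hw : ∀ x, ∑ m, w (update x i m) = 1) (hF : ∀ x m, F (update x i m) = F x) :
    Fintype.card (α i) * ∑ x, w x * F x = ∑ x, F x := by
  rw [← nsmul_eq_mul, ← Fintype.sum_sum_update i]
  simp_rw [hF, ← Finset.sum_mul, hw, one_mul]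

end UpdateSum

section Network
variable {q : ℕ} {kk : Fin q → ℕ} {pa : Fin q → Finset (Fin q)}

theorem restr_update_of_notMem {S : Finset (Fin q)} {i : Fin q} (hi : i ∉ S)
    (x : (j : Fin q) → Fin (kk j)) (m : Fin (kk i)) : restr (update x i m) S = restr x S := by
  funext u
  have hu : (u : Fin q) ≠ i := fun h => hi (h ▸ u.2)
  exact update_of_ne hu m x

theorem exists_restr_eq (hkk : ∀ j, 1 ≤ kk j) {S : Finset (Fin q)} (s : Conf q kk S) :
    ∃ x : (j : Fin q) → Fin (kk j), restr x S = s :=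
  ⟨fun j => if hj : j ∈ S then s ⟨j, hj⟩ else ⟨0, hkk j⟩, funext fun u => dif_pos u.2⟩

def DescendantClosed (pa : Fin q → Finset (Fin q)) (T : Finset (Fin q)) : Prop :=
  ∀ j, ∀ u ∈ pa j, u ∈ T → j ∈ T

theorem prod_card_mul_sum_mul_jointP {β : Type*} [LinearOrder β] {ρ : Fin q → β}
    (hρ : ∀ j, ∀ u ∈ pa j, ρ u < ρ j) {θ : (j : Fin q) → Conf q kk (pa j) → Fin (kk j) → ℝ}
    (hθsum : ∀ j s, ∑ m, θ j s m = 1) {T : Finset (Fin q)} (hT : DescendantClosed pa T)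
    (f : ((j : Fin q) → Fin (kk j)) → ℝ) (hf : ∀ x, ∀ i ∈ T, ∀ m, f (update x i m) = f x) :
    (∏ j ∈ T, (kk j : ℝ)) * ∑ x, f x * jointP pa θ x =
      ∑ x, f x * ∏ j ∈ Tᶜ, θ j (restr x (pa j)) (x j) := by
  induction T using Finset.strongInduction with
  | H T ih =>
  rcases T.eq_empty_or_nonempty with rfl | hne
  · simp [jointP]
  obtain ⟨i, hiT, hmin⟩ := T.exists_min_image ρ hne
  have hT' : DescendantClosed pa (T.erase i) := by
    intro j u hu huT
    refine mem_erase.2 ⟨?_, hT j u hu (mem_of_mem_erase huT)⟩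
    intro hji
    rw [hji] at hu
    exact (hmin u (mem_of_mem_erase huT)).not_gt (hρ i u hu)
  have hi_pa : i ∉ pa i := fun h => lt_irrefl _ (hρ i i h)
  calc (∏ j ∈ T, (kk j : ℝ)) * ∑ x, f x * jointP pa θ x
      = kk i * ((∏ j ∈ T.erase i, (kk j : ℝ)) * ∑ x, f x * jointP pa θ x) := by
        rw [← mul_prod_erase T _ hiT, mul_assoc]
    _ = kk i * ∑ x, θ i (restr x (pa i)) (x i) *
          (f x * ∏ j ∈ Tᶜ, θ j (restr x (pa j)) (x j)) := by
        rw [ih _ (erase_ssubset hiT) hT' fun x j hj => hf x j (mem_of_mem_erase hj),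
          compl_erase]
        congr 1
        refine sum_congr rfl fun x _ => ?_
        rw [prod_insert (notMem_compl.2 hiT)]
        ring
    _ = ∑ x, f x * ∏ j ∈ Tᶜ, θ j (restr x (pa j)) (x j) := by
        rw [← Fintype.card_fin (kk i)]
        -- Nothing outside `T` reads `x i`, and the table of `i` sums to one.
        refine card_mul_sum_mul_eq_sum (α := fun j => Fin (kk j)) i _ _
          (fun x => ?_) (fun x m => ?_)
        · simp only [update_self, restr_update_of_notMem hi_pa]
          exact hθsum i _
        · rw [hf x i hiT m]
          congr 1
          refine prod_congr rfl fun j hj => ?_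
          have hji : j ≠ i := fun h => mem_compl.1 hj (h ▸ hiT)
          have hipa : i ∉ pa j := fun h => mem_compl.1 hj (hT j i h hiT)
          rw [restr_update_of_notMem hipa, update_of_ne hji]

theorem probOf_eq_sum_boole_mul (θ : (j : Fin q) → Conf q kk (pa j) → Fin (kk j) → ℝ)
    (A : ((j : Fin q) → Fin (kk j)) → Prop) [DecidablePred A] :
    probOf pa θ A = ∑ x, (if A x then 1 else 0) * jointP pa θ x := by
  simp only [probOf, sum_filter, boole_mul]
  congr!

theorem probOf_eq_of_eqOn_compl {β : Type*} [LinearOrder β] {ρ : Fin q → β}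
    (hρ : ∀ j, ∀ u ∈ pa j, ρ u < ρ j) {θ θ' : (j : Fin q) → Conf q kk (pa j) → Fin (kk j) → ℝ}
    (hθsum : ∀ j s, ∑ m, θ j s m = 1) (hθ'sum : ∀ j s, ∑ m, θ' j s m = 1)
    {T : Finset (Fin q)} (hT : DescendantClosed pa T) (hkk : ∀ j ∈ T, kk j ≠ 0)
    (hθθ' : ∀ j ∉ T, θ' j = θ j) (A : ((j : Fin q) → Fin (kk j)) → Prop)
    (hA : ∀ x, ∀ i ∈ T, ∀ m, (A (update x i m) ↔ A x)) :
    probOf pa θ' A = probOf pa θ A := by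
  classical
  have hf : ∀ x, ∀ i ∈ T, ∀ m,
      (fun x => if A x then (1 : ℝ) else 0) (update x i m) = if A x then 1 else 0 := by
    intro x i hi m
    simp only [hA x i hi m]
  have hcard : (∏ j ∈ T, (kk j : ℝ)) ≠ 0 :=
    prod_ne_zero_iff.2 fun j hj => by exact_mod_cast hkk j hj
  rw [probOf_eq_sum_boole_mul, probOf_eq_sum_boole_mul]
  refine mul_left_cancel₀ hcard ?_
  rw [prod_card_mul_sum_mul_jointP hρ hθ'sum hT _ hf,
    prod_card_mul_sum_mul_jointP hρ hθsum hT _ hf]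
  refine sum_congr rfl fun x _ => ?_
  congr 1
  exact prod_congr rfl fun j hj => by rw [hθθ' j (mem_compl.1 hj)]

def intervene (θ : (j : Fin q) → Conf q kk (pa j) → Fin (kk j) → ℝ) (h : Fin q)
    (xt : Fin (kk h)) :
    (j : Fin q) → Conf q kk (pa j) → Fin (kk j) → ℝ :=
  update θ h fun _ m => if m = xt then 1 else 0

variable {θ : (j : Fin q) → Conf q kk (pa j) → Fin (kk j) → ℝ}

theorem sum_intervene (hθsum : ∀ j s, ∑ m, θ j s m = 1) (h : Fin q) (xt : Fin (kk h))
    (j : Fin q) (s : Conf q kk (pa j)) : ∑ m, intervene θ h xt j s m = 1 := by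
  by_cases hj : j = h
  · subst hj
    simp [intervene]
  · simp only [intervene, update_of_ne hj, hθsum]

theorem jointP_intervene (h : Fin q) (xt : Fin (kk h)) (x : (j : Fin q) → Fin (kk j)) :
    jointP pa (intervene θ h xt) x =
      if x h = xt then ∏ j ∈ univ.erase h, θ j (restr x (pa j)) (x j) else 0 := by
  rw [jointP, ← mul_prod_erase univ _ (mem_univ h)]
  simp only [intervene, update_self, boole_mul]
  congr 1
  exact prod_congr rfl fun j hj => by rw [update_of_ne (ne_of_mem_erase hj)]

theorem probOf_and_eq_mul_probOf_intervene (h : Fin q) (xt : Fin (kk h))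
    (s : Conf q kk (pa h)) (A : ((j : Fin q) → Fin (kk j)) → Prop) :
    probOf pa θ (fun x => A x ∧ x h = xt ∧ restr x (pa h) = s) =
      θ h s xt * probOf pa (intervene θ h xt) (fun x => A x ∧ restr x (pa h) = s) := by
  classical
  rw [probOf_eq_sum_boole_mul, probOf_eq_sum_boole_mul, mul_sum]
  refine sum_congr rfl fun x _ => ?_
  rw [jointP_intervene, jointP, ← mul_prod_erase univ _ (mem_univ h)]
  by_cases hA : A x <;> by_cases hxt : x h = xt <;> by_cases hs : restr x (pa h) = s <;>
    simp [hA, hxt, hs]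

theorem probOf_eq_sum_probOf_and_restr (S : Finset (Fin q))
    (A : ((j : Fin q) → Fin (kk j)) → Prop) :
    probOf pa θ A = ∑ s : Conf q kk S, probOf pa θ (fun x => A x ∧ restr x S = s) := by
  classical
  rw [probOf, ← sum_fiberwise _ (fun x => restr x S)]
  refine sum_congr rfl fun s _ => ?_
  rw [probOf, filter_filter]
  congr!

theorem probOf_pos (hθpos : ∀ j s m, 0 < θ j s m) {A : ((j : Fin q) → Fin (kk j)) → Prop}
    (x : (j : Fin q) → Fin (kk j)) (hx : A x) : 0 < probOf pa θ A := by
  classical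
  refine sum_pos' (fun y _ => (prod_pos fun j _ => hθpos j _ _).le) ⟨x, ?_, ?_⟩
  · simpa using hx
  · exact prod_pos fun j _ => hθpos j _ _

theorem doExp_eq_probOf_intervene (h j₀ : Fin q) (hbin : kk j₀ = 2) (xt : Fin (kk h)) :
    doExp pa θ h j₀ xt = probOf pa (intervene θ h xt) (fun x => x j₀ = ⟨1, by omega⟩) := by
  classical
  have hval : ∀ m : Fin (kk j₀), ((m : ℕ) : ℝ) = if m = ⟨1, by omega⟩ then 1 else 0 := by
    rintro ⟨m, hm⟩
    simp only [Fin.mk.injEq]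
    rcases (by omega : m = 0 ∨ m = 1) with rfl | rfl <;> simp
  rw [probOf_eq_sum_boole_mul, doExp, sum_filter]
  refine sum_congr rfl fun x _ => ?_
  rw [jointP_intervene, hval]
  split_ifs <;> simp

theorem probOf_and_restr_parents_eq_mul {β : Type*} [LinearOrder β] {ρ : Fin q → β}
    (hρ : ∀ j, ∀ u ∈ pa j, ρ u < ρ j) (hkk : ∀ j, 1 ≤ kk j) (hθsum : ∀ j s, ∑ m, θ j s m = 1)
    (h : Fin q) (xt : Fin (kk h)) (s : Conf q kk (pa h)) :
    probOf pa θ (fun x => x h = xt ∧ restr x (pa h) = s) =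
      θ h s xt * probOf pa θ (fun x => restr x (pa h) = s) := by
  have hsplit := probOf_and_eq_mul_probOf_intervene (θ := θ) h xt s fun _ => True
  simp only [true_and] at hsplit
  rw [hsplit]
  congr 1
  refine probOf_eq_of_eqOn_compl hρ hθsum (sum_intervene hθsum h xt)
    (T := univ.filter fun j => ρ h ≤ ρ j) ?_ ?_ ?_ _ ?_
  · intro j u hu hu_mem
    simp only [mem_filter, mem_univ, true_and] at hu_mem ⊢
    exact hu_mem.trans (hρ j u hu).le
  · exact fun j _ => Nat.one_le_iff_ne_zero.mp (hkk j)
  · intro j hj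
    have hjh : j ≠ h := by rintro rfl; simp at hj
    exact update_of_ne hjh _ _
  · intro x i hi m
    have hipa : i ∉ pa h := fun hmem => by
      simp only [mem_filter, mem_univ, true_and] at hi
      exact hi.not_gt (hρ h i hmem)
    rw [restr_update_of_notMem hipa]

end Network

/-- Causal effect identity for a binary exposure `X_h` and binary response `X_{j₀}`:
for an acyclic DAG with strictly positive conditional probability tables, the causal
effect `c = E[X_{j₀} | do(X_h = 1)] − E[X_{j₀} | do(X_h = 0)]` equals the
parent-adjusted difference of observational conditional probabilities. -/
theorem causal_effect_binary (q : ℕ) (kk : Fin q → ℕ) (hkk : ∀ j, 1 ≤ kk j)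
    (pa : Fin q → Finset (Fin q))
    (hacyclic : ∃ ρ : Fin q ≃ Fin q, ∀ j : Fin q, ∀ u ∈ pa j, ρ u < ρ j)
    (θ : (j : Fin q) → Conf q kk (pa j) → Fin (kk j) → ℝ)
    (hθpos : ∀ j s m, 0 < θ j s m)
    (hθsum : ∀ j s, ∑ m : Fin (kk j), θ j s m = 1)
    (h : Fin q) (j₀ : Fin q)
    (hbinh : kk h = 2) (hbinj : kk j₀ = 2) :
    doExp pa θ h j₀ ⟨1, by omega⟩ - doExp pa θ h j₀ ⟨0, by omega⟩ =
      ∑ s : Conf q kk (pa h),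
        (probOf pa θ (fun x => x j₀ = ⟨1, by omega⟩ ∧ x h = ⟨1, by omega⟩ ∧
              restr x (pa h) = s) /
            probOf pa θ (fun x => x h = ⟨1, by omega⟩ ∧ restr x (pa h) = s) -
          probOf pa θ (fun x => x j₀ = ⟨1, by omega⟩ ∧ x h = ⟨0, by omega⟩ ∧
              restr x (pa h) = s) /
            probOf pa θ (fun x => x h = ⟨0, by omega⟩ ∧ restr x (pa h) = s)) *
          probOf pa θ (fun x => restr x (pa h) = s) := by
  obtain ⟨ρ, hρ⟩ := hacyclic
  have hterm : ∀ (xt : Fin (kk h)) (s : Conf q kk (pa h)),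
      probOf pa θ (fun x => x j₀ = ⟨1, by omega⟩ ∧ x h = xt ∧ restr x (pa h) = s) /
          probOf pa θ (fun x => x h = xt ∧ restr x (pa h) = s) *
          probOf pa θ (fun x => restr x (pa h) = s) =
        probOf pa (intervene θ h xt) (fun x => x j₀ = ⟨1, by omega⟩ ∧ restr x (pa h) = s) := by
    intro xt s
    obtain ⟨x, hx⟩ := exists_restr_eq hkk s
    have hpos : 0 < probOf pa θ (fun x => restr x (pa h) = s) := probOf_pos hθpos x hx
    rw [probOf_and_eq_mul_probOf_intervene, probOf_and_restr_parents_eq_mul hρ hkk hθsum,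
      mul_div_mul_left _ _ (hθpos h s xt).ne', div_mul_cancel₀ _ hpos.ne']
  rw [doExp_eq_probOf_intervene h j₀ hbinj, doExp_eq_probOf_intervene h j₀ hbinj,
    probOf_eq_sum_probOf_and_restr (pa h), probOf_eq_sum_probOf_and_restr (pa h),
    ← sum_sub_distrib]
  simp only [sub_mul, hterm]
end

section
/- Escobar–West Gamma-mixture identity: let c > 0, let K ≥ 1 be an integer (so c + K − 1 > 0), let n ≥ 1 be an integer, let η ∈ (0,1) and d > 0, and set β = d − log η > 0. Then for every α > 0, α^{c+K−2}(α+n)e^{−βα} = [Γ(c+K)/β^{c+K}] · f_{c+K,β}(α) + n·[Γ(c+K−1)/β^{c+K−1}] · f_{c+K−1,β}(α), where f_{k,θ}(α) = θ^k α^{k−1} e^{−θα}/Γ(k) is the Gamma(k,θ) density. Consequently, the normalized weight g = [Γ(c+K)/β^{c+K}] / ([Γ(c+K)/β^{c+K}] + n·Γ(c+K−1)/β^{c+K−1}) of the first component satisfies g/(1−g) = (c+K−1)/(nβ) = (c+K−1)/(n(d − log η)); i.e., the full conditional of the DP concentration parameter α given the auxiliary variable η and the number of clusters K is the stated two-component mixture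 of Gamma distributions. -/
/-! Multiplying the Gamma(k, θ) density by its normalizer `Γ(k)/θ^k` recovers the bare kernel
`α^(k-1) e^(-θα)`, and `α^(s-2)(α + n) = α^(s-1) + n α^(s-2)` splits the conditional density into two
such kernels. The odds of the two mixture weights then come from `Γ(s) = (s-1) Γ(s-1)` and
`θ^s = θ θ^(s-1)`. -/

/-- The `Gamma(k, θ)` density (shape `k > 0`, rate `θ > 0`) at `α`. -/
noncomputable def gammaDensity (k θ α : ℝ) : ℝ :=
  θ ^ k * α ^ (k - 1) * Real.exp (-θ * α) / Real.Gamma k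

open Real

noncomputable def gammaNormalizer (k θ : ℝ) : ℝ :=
  Gamma k / θ ^ k

lemma gammaNormalizer_pos {k θ : ℝ} (hk : 0 < k) (hθ : 0 < θ) : 0 < gammaNormalizer k θ :=
  div_pos (Gamma_pos_of_pos hk) (rpow_pos_of_pos hθ k)

lemma gammaNormalizer_mul_gammaDensity {k θ : ℝ} (hk : 0 < k) (hθ : 0 < θ) (α : ℝ) :
    gammaNormalizer k θ * gammaDensity k θ α = α ^ (k - 1) * exp (-θ * α) := by
  have hΓ : Gamma k ≠ 0 := (Gamma_pos_of_pos hk).ne'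
  have hθk : θ ^ k ≠ 0 := (rpow_pos_of_pos hθ k).ne'
  unfold gammaNormalizer gammaDensity
  field_simp

lemma gammaNormalizer_eq_mul_sub_one {s θ : ℝ} (hs : 1 < s) (hθ : 0 < θ) :
    gammaNormalizer s θ = (s - 1) / θ * gammaNormalizer (s - 1) θ := by
  have hΓ : Gamma s = (s - 1) * Gamma (s - 1) := by
    simpa using Gamma_add_one (sub_pos.mpr hs).ne'
  have hθs : θ ^ s = θ * θ ^ (s - 1) := by
    simpa [rpow_one] using rpow_add hθ 1 (s - 1)
  unfold gammaNormalizer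
  rw [hΓ, hθs, mul_div_mul_comm]

lemma rpow_sub_two_mul_add_mul_exp_eq_mixture {s θ : ℝ} (hs : 1 < s) (hθ : 0 < θ) (n : ℝ) {α : ℝ}
    (hα : 0 < α) :
    α ^ (s - 2) * (α + n) * exp (-θ * α) =
      gammaNormalizer s θ * gammaDensity s θ α +
        n * gammaNormalizer (s - 1) θ * gammaDensity (s - 1) θ α := by
  have hα_pow : α ^ (s - 1) = α ^ (s - 2) * α := by
    rw [show s - 1 = s - 2 + 1 by ring, rpow_add hα, rpow_one]
  rw [gammaNormalizer_mul_gammaDensity (by linarith) hθ, mul_assoc n,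
    gammaNormalizer_mul_gammaDensity (by linarith) hθ, show s - 1 - 1 = s - 2 by ring, hα_pow]
  ring

lemma gammaNormalizer_div_mul_gammaNormalizer_sub_one {s θ : ℝ} (hs : 1 < s) (hθ : 0 < θ)
    (n : ℝ) : gammaNormalizer s θ / (n * gammaNormalizer (s - 1) θ) = (s - 1) / (n * θ) := by
  rw [gammaNormalizer_eq_mul_sub_one hs hθ,
    mul_div_mul_right _ _ (gammaNormalizer_pos (sub_pos.mpr hs) hθ).ne', div_div, mul_comm θ]

lemma div_add_div_one_sub_div_add {𝕜 : Type*} [Field 𝕜] {a b : 𝕜} (h : a + b ≠ 0) :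
    a / (a + b) / (1 - a / (a + b)) = a / b := by
  rw [one_sub_div h, add_sub_cancel_left, div_div_div_cancel_right₀ h]

theorem escobar_west_mixture_general (c : ℝ) (hc : 0 < c) (K : ℕ) (hK : 1 ≤ K)
    (n : ℕ) (η : ℝ) (hη : η ∈ Set.Ioo (0 : ℝ) 1) (d : ℝ) (hd : 0 < d)
    (β : ℝ) (hβ : β = d - Real.log η) :
    0 < β ∧
    (∀ α : ℝ, 0 < α →
      α ^ (c + K - 2) * (α + n) * Real.exp (-β * α) =
        Real.Gamma (c + K) / β ^ (c + K) * gammaDensity (c + K) β α +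
          n * (Real.Gamma (c + K - 1) / β ^ (c + K - 1)) *
            gammaDensity (c + K - 1) β α) ∧
    (Real.Gamma (c + K) / β ^ (c + K) /
          (Real.Gamma (c + K) / β ^ (c + K) +
            n * (Real.Gamma (c + K - 1) / β ^ (c + K - 1)))) /
        (1 - Real.Gamma (c + K) / β ^ (c + K) /
          (Real.Gamma (c + K) / β ^ (c + K) +
            n * (Real.Gamma (c + K - 1) / β ^ (c + K - 1)))) =
      (c + K - 1) / (n * (d - Real.log η)) := by
  have hβ_pos : 0 < β := by
    rw [hβ]
    linarith [log_neg hη.1 hη.2]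
  have hs : 1 < c + K := by
    have : (1 : ℝ) ≤ K := by exact_mod_cast hK
    linarith
  refine ⟨hβ_pos, fun α hα => rpow_sub_two_mul_add_mul_exp_eq_mixture hs hβ_pos n hα, ?_⟩
  have hweights : gammaNormalizer (c + K) β + n * gammaNormalizer (c + K - 1) β ≠ 0 :=
    (add_pos_of_pos_of_nonneg (gammaNormalizer_pos (by linarith) hβ_pos)
      (mul_nonneg n.cast_nonneg (gammaNormalizer_pos (by linarith) hβ_pos).le)).ne'
  refine (div_add_div_one_sub_div_add hweights).trans ?_
  rw [← hβ]
  exact gammaNormalizer_div_mul_gammaNormalizer_sub_one hs hβ_pos n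

/-- Escobar–West Gamma-mixture identity for the full conditional of the DP
concentration parameter `α` given the auxiliary variable `η` and the number of
clusters `K`: the unnormalized density `α^{c+K-2}(α+n)e^{−βα}`, with
`β = d − log η > 0`, is the stated two-component mixture of Gamma densities, and
the normalized weight `g` of the first component satisfies
`g/(1−g) = (c+K−1)/(n(d − log η))`. -/
theorem escobar_west_mixture (c : ℝ) (hc : 0 < c) (K : ℕ) (hK : 1 ≤ K)
    (n : ℕ) (hn : 1 ≤ n) (η : ℝ) (hη : η ∈ Set.Ioo (0 : ℝ) 1) (d : ℝ) (hd : 0 < d)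
    (β : ℝ) (hβ : β = d - Real.log η) :
    0 < β ∧
    (∀ α : ℝ, 0 < α →
      α ^ (c + K - 2) * (α + n) * Real.exp (-β * α) =
        Real.Gamma (c + K) / β ^ (c + K) * gammaDensity (c + K) β α +
          n * (Real.Gamma (c + K - 1) / β ^ (c + K - 1)) *
            gammaDensity (c + K - 1) β α) ∧
    (Real.Gamma (c + K) / β ^ (c + K) /
          (Real.Gamma (c + K) / β ^ (c + K) +
            n * (Real.Gamma (c + K - 1) / β ^ (c + K - 1)))) /
        (1 - Real.Gamma (c + K) / β ^ (c + K) /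
          (Real.Gamma (c + K) / β ^ (c + K) +
            n * (Real.Gamma (c + K - 1) / β ^ (c + K - 1)))) =
      (c + K - 1) / (n * (d - Real.log η)) :=
  escobar_west_mixture_general c hc K hK n η hη d hd β hβ
end
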